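/- arXiv:1802.00228 — 3 statements merged into one kernel-verified Lean document; each statement's English description precedes it below -/
import Mathlib

section
/- Let θ0 be real, α ∈ (0,1), x fixed, and let h : ℝ → ℝ be a nonnegative function (θ ↦ f(x|θ)). Suppose the suprema are attained: there exist θp ≥ θ0 with h(θp) = sup_{θ ≥ θ0} h(θ) and θd < θ0 with h(θd) = sup_{θ < θ0} h(θ), and suppose h(θd) > 0. Then the two-point prior π = α·δ_{θp} + (1−α)·δ_{θd} satisfies the quantile restriction π([θ0,∞)) = α, it maximizes ∫ h dπ over all probability measures with that quantile restriction, and the corresponding strength of evidence equals V(x) = (∫_{[θ0,∞)} h dπ / α) / (∫_{(-∞,θ0)} h dπ / (1−α)) = sup_{θ ≥ θ0} h(θ) / sup_{θ < θ0} h(θ). -/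
/-!
Under the quantile restriction a prior puts mass `α` on `[θ0, ∞)` and `1 - α` on its
complement, and on each part `h` is bounded by its attained supremum, so `∫ h dμ` is at most
`α h(θp) + (1 - α) h(θd) = ∫ h dπ`. Restricted to either hypothesis, `π` is a single weighted
atom, so the weights cancel in the Bayes factor and leave `h(θp) / h(θd)`.
-/

open MeasureTheory

section TwoPointPrior

variable {X : Type*} [MeasurableSpace X]

theorem setIntegral_smul_dirac_add_smul_dirac [MeasurableSingletonClass X] (f : X → ℝ)
    {p q : ℝ} (hp : 0 ≤ p) (hq : 0 ≤ q) (a b : X) (s : Set X) :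
    ∫ x in s, f x ∂(ENNReal.ofReal p • Measure.dirac a + ENNReal.ofReal q • Measure.dirac b) =
      p * s.indicator f a + q * s.indicator f b := by
  classical
  have hint (r : ℝ) (c : X) : Integrable f (ENNReal.ofReal r • (Measure.dirac c).restrict s) :=
    (integrable_dirac enorm_lt_top).restrict.smul_measure ENNReal.ofReal_ne_top
  rw [Measure.restrict_add, Measure.restrict_smul, Measure.restrict_smul,
    integral_add_measure (hint p a) (hint q b), integral_smul_measure,
    integral_smul_measure, setIntegral_dirac, setIntegral_dirac,
    ENNReal.toReal_ofReal hp, ENNReal.toReal_ofReal hq, smul_eq_mul, smul_eq_mul,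
    Set.indicator_apply, Set.indicator_apply]

theorem integrable_of_nonneg_of_le {μ : Measure X} [IsFiniteMeasure μ] {f : X → ℝ}
    (hf : Measurable f) (hf0 : ∀ x, 0 ≤ f x) {C : ℝ} (hC : ∀ x, f x ≤ C) :
    Integrable f μ :=
  Integrable.of_bound hf.aestronglyMeasurable C <| ae_of_all _ fun x => by
    rw [Real.norm_of_nonneg (hf0 x)]
    exact hC x

theorem integral_le_of_le_on_of_le_on_compl {μ : Measure X} [IsProbabilityMeasure μ]
    {f : X → ℝ} (hf : Integrable f μ) {s : Set X} (hs : MeasurableSet s) {M m : ℝ}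
    (hM : ∀ x ∈ s, f x ≤ M) (hm : ∀ x ∈ sᶜ, f x ≤ m) :
    ∫ x, f x ∂μ ≤ μ.real s * M + (1 - μ.real s) * m := by
  have bound_on {t : Set X} (ht : MeasurableSet t) {c : ℝ} (hc : ∀ x ∈ t, f x ≤ c) :
      ∫ x in t, f x ∂μ ≤ μ.real t * c := by
    rw [← smul_eq_mul, ← setIntegral_const]
    exact setIntegral_mono_on hf.integrableOn (integrable_const c).integrableOn ht hc
  rw [← integral_add_compl hs hf, ← probReal_compl_eq_one_sub hs]
  exact add_le_add (bound_on hs hM) (bound_on hs.compl hm)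

end TwoPointPrior

theorem two_point_prior_maximizes_and_gives_ratio_of_sups_general
    (θ0 α : ℝ) (hα0 : 0 < α) (hα1 : α < 1)
    (h : ℝ → ℝ) (hmeas : Measurable h) (hnonneg : ∀ θ, 0 ≤ h θ)
    (θp θd : ℝ) (hθp : θ0 ≤ θp) (hθd : θd < θ0)
    (hmaxp : IsGreatest (h '' Set.Ici θ0) (h θp))
    (hmaxd : IsGreatest (h '' Set.Iio θ0) (h θd)) :
    let π : Measure ℝ :=
      ENNReal.ofReal α • Measure.dirac θp + ENNReal.ofReal (1 - α) • Measure.dirac θd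
    π (Set.Ici θ0) = ENNReal.ofReal α ∧
    (∀ μ : Measure ℝ, IsProbabilityMeasure μ → μ (Set.Ici θ0) = ENNReal.ofReal α →
      ∫ θ, h θ ∂μ ≤ ∫ θ, h θ ∂π) ∧
    ((∫ θ in Set.Ici θ0, h θ ∂π) / α) / ((∫ θ in Set.Iio θ0, h θ ∂π) / (1 - α))
      = sSup (h '' Set.Ici θ0) / sSup (h '' Set.Iio θ0) := by
  intro π
  have hπ (s : Set ℝ) : ∫ θ in s, h θ ∂π = α * s.indicator h θp + (1 - α) * s.indicator h θd :=
    setIntegral_smul_dirac_add_smul_dirac h hα0.le (sub_nonneg.2 hα1.le) θp θd s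
  have hle_p (θ : ℝ) (hθ : θ ∈ Set.Ici θ0) : h θ ≤ h θp := hmaxp.2 ⟨θ, hθ, rfl⟩
  have hle_d (θ : ℝ) (hθ : θ ∈ (Set.Ici θ0)ᶜ) : h θ ≤ h θd :=
    hmaxd.2 ⟨θ, by simpa using hθ, rfl⟩
  refine ⟨by simp [π, hθp, hθd.not_ge], fun μ _ hμ => ?_, ?_⟩
  · have hint : Integrable h μ := integrable_of_nonneg_of_le hmeas hnonneg
      (C := max (h θp) (h θd)) fun θ => (le_or_gt θ0 θ).elim
        (fun hθ => le_max_of_le_left (hle_p θ hθ))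
        (fun hθ => le_max_of_le_right (hle_d θ (not_le.2 hθ)))
    have hμ_real : μ.real (Set.Ici θ0) = α := by
      rw [measureReal_def, hμ, ENNReal.toReal_ofReal hα0.le]
    calc ∫ θ, h θ ∂μ ≤ α * h θp + (1 - α) * h θd :=
          hμ_real ▸ integral_le_of_le_on_of_le_on_compl hint measurableSet_Ici hle_p hle_d
      _ = ∫ θ, h θ ∂π := by simpa using (hπ Set.univ).symm
  · have hπp : ∫ θ in Set.Ici θ0, h θ ∂π = α * h θp := by
      simp [hπ, hθp, hθd.not_ge]
    have hπd : ∫ θ in Set.Iio θ0, h θ ∂π = (1 - α) * h θd := by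
      simp [hπ, hθd, hθp.not_gt]
    rw [hπp, hπd, hmaxp.csSup_eq, hmaxd.csSup_eq, mul_div_cancel_left₀ _ hα0.ne',
      mul_div_cancel_left₀ _ (sub_ne_zero.2 hα1.ne')]

/-- The two-point prior `π = α·δ_{θp} + (1−α)·δ_{θd}`, where `θp` and `θd` attain the
suprema of `θ ↦ h θ = f(x|θ)` over `[θ0,∞)` and `(-∞,θ0)` respectively, satisfies the
quantile restriction, maximizes the likelihood of the evidence among all priors with
that restriction, and yields strength of evidence equal to the ratio of the two suprema. -/
theorem two_point_prior_maximizes_and_gives_ratio_of_sups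
    (θ0 α : ℝ) (hα0 : 0 < α) (hα1 : α < 1)
    (h : ℝ → ℝ) (hmeas : Measurable h) (hnonneg : ∀ θ, 0 ≤ h θ)
    (θp θd : ℝ) (hθp : θ0 ≤ θp) (hθd : θd < θ0)
    (hmaxp : IsGreatest (h '' Set.Ici θ0) (h θp))
    (hmaxd : IsGreatest (h '' Set.Iio θ0) (h θd))
    (hd_pos : 0 < h θd) :
    let π : Measure ℝ :=
      ENNReal.ofReal α • Measure.dirac θp + ENNReal.ofReal (1 - α) • Measure.dirac θd
    π (Set.Ici θ0) = ENNReal.ofReal α ∧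
    (∀ μ : Measure ℝ, IsProbabilityMeasure μ → μ (Set.Ici θ0) = ENNReal.ofReal α →
      ∫ θ, h θ ∂μ ≤ ∫ θ, h θ ∂π) ∧
    ((∫ θ in Set.Ici θ0, h θ ∂π) / α) / ((∫ θ in Set.Iio θ0, h θ ∂π) / (1 - α))
      = sSup (h '' Set.Ici θ0) / sSup (h '' Set.Iio θ0) :=
  two_point_prior_maximizes_and_gives_ratio_of_sups_general θ0 α hα0 hα1 h hmeas hnonneg θp θd hθp
    hθd hmaxp hmaxd
end

section
/- Let σ > 0, θ0 ∈ ℝ, c < 0, and g_τ(x) = (1/√(σ²+τ²))·φ((x−θ0+cτ)/√(σ²+τ²)) for τ ≥ 0. If x < θ0 and (x−θ0)² < 3σ²(c²+1)/(c²+3), then the cubic P(τ) = −τ³ + c(x−θ0)τ² + ((x−θ0)² − σ²(c²+1))τ − c(x−θ0)σ² is strictly negative for all τ > 0, and consequently τ ↦ g_τ(x) is strictly decreasing on [0,∞), so its unique maximizer over τ ≥ 0 is τ = 0. -/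
/-!
With `u = σ² + τ²`, the chain rule together with `φ' t = −t φ t` gives
`d/dτ g_τ(x) = g_τ(x) · P(τ) / u²`, so the sign of the derivative is that of the cubic `P`.
With `a = c (x − θ0) > 0`, the hypothesis on `(x − θ0)²` says
`σ² (c² + 1) > (a² + 3 (x − θ0)²) / 3`, whence for `τ > 0`
`P(τ) < −τ ((τ − a/2)² + a²/12) − a σ² < 0`.
-/

/-- The standard normal density. -/
noncomputable def stdNormalPDF (t : ℝ) : ℝ := Real.exp (-t ^ 2 / 2) / Real.sqrt (2 * Real.pi)

open Real Set

/-- The cubic `P` of the paper, with `d = x − θ0`. -/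
def marginalCubic (σ c d τ : ℝ) : ℝ :=
  -τ ^ 3 + c * d * τ ^ 2 + (d ^ 2 - σ ^ 2 * (c ^ 2 + 1)) * τ - c * d * σ ^ 2

theorem marginalCubic_neg {σ c d τ : ℝ} (hcd : 0 < c * d)
    (hd : d ^ 2 * (c ^ 2 + 3) < 3 * σ ^ 2 * (c ^ 2 + 1)) (hτ : 0 < τ) :
    marginalCubic σ c d τ < 0 := by
  have hσ : 0 < σ ^ 2 := by nlinarith [sq_nonneg d, sq_nonneg c]
  have hquad : 0 ≤ τ * ((τ - c * d / 2) ^ 2 + (c * d) ^ 2 / 12) := by positivity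
  unfold marginalCubic
  nlinarith [mul_pos hcd hσ]

theorem stdNormalPDF_pos (t : ℝ) : 0 < stdNormalPDF t := by
  unfold stdNormalPDF; positivity

theorem hasDerivAt_stdNormalPDF (t : ℝ) : HasDerivAt stdNormalPDF (-t * stdNormalPDF t) t := by
  have h : HasDerivAt (fun s : ℝ => -s ^ 2 / 2) (-t) t :=
    ((hasDerivAt_pow 2 t).neg.div_const 2).congr_deriv (by norm_num; ring)
  exact (h.exp.div_const _).congr_deriv (by rw [stdNormalPDF]; ring)

theorem hasDerivAt_marginalLikelihood {σ c d τ : ℝ} (hu : 0 < σ ^ 2 + τ ^ 2) :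
    HasDerivAt (fun τ => 1 / √(σ ^ 2 + τ ^ 2) * stdNormalPDF ((d + c * τ) / √(σ ^ 2 + τ ^ 2)))
      (1 / √(σ ^ 2 + τ ^ 2) * stdNormalPDF ((d + c * τ) / √(σ ^ 2 + τ ^ 2))
        * marginalCubic σ c d τ / (σ ^ 2 + τ ^ 2) ^ 2) τ := by
  have hs : 0 < √(σ ^ 2 + τ ^ 2) := sqrt_pos.mpr hu
  have hs2 : √(σ ^ 2 + τ ^ 2) ^ 2 = σ ^ 2 + τ ^ 2 := sq_sqrt hu.le
  have hu' : HasDerivAt (fun τ => σ ^ 2 + τ ^ 2) (2 * τ) τ := by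
    simpa using (hasDerivAt_pow 2 τ).const_add (σ ^ 2)
  have hsqrt := hu'.sqrt hu.ne'
  have hw : HasDerivAt (fun τ => d + c * τ) c τ := by
    simpa using ((hasDerivAt_id τ).const_mul c).const_add d
  have h := ((hasDerivAt_const τ (1 : ℝ)).div hsqrt hs.ne').mul
    ((hasDerivAt_stdNormalPDF _).comp τ (hw.div hsqrt hs.ne'))
  refine h.congr_deriv ?_
  simp only [Pi.div_apply, Function.comp_apply]
  unfold marginalCubic
  field_simp
  rw [show √(σ ^ 2 + τ ^ 2) ^ 4 = (√(σ ^ 2 + τ ^ 2) ^ 2) ^ 2 by ring, hs2]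
  ring

theorem strictAntiOn_marginalLikelihood {σ c d : ℝ} (hσ : σ ≠ 0)
    (hP : ∀ τ, 0 < τ → marginalCubic σ c d τ < 0) :
    StrictAntiOn (fun τ => 1 / √(σ ^ 2 + τ ^ 2) * stdNormalPDF ((d + c * τ) / √(σ ^ 2 + τ ^ 2)))
      (Ici 0) := by
  have hu (τ : ℝ) : 0 < σ ^ 2 + τ ^ 2 := by positivity
  refine strictAntiOn_of_deriv_neg (convex_Ici 0)
    (fun τ _ => (hasDerivAt_marginalLikelihood (hu τ)).continuousAt.continuousWithinAt) ?_
  intro τ hτ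
  rw [interior_Ici] at hτ
  rw [(hasDerivAt_marginalLikelihood (hu τ)).deriv]
  have hg : 0 < 1 / √(σ ^ 2 + τ ^ 2) * stdNormalPDF ((d + c * τ) / √(σ ^ 2 + τ ^ 2)) :=
    mul_pos (one_div_pos.mpr (sqrt_pos.mpr (hu τ))) (stdNormalPDF_pos _)
  exact div_neg_of_neg_of_pos (mul_neg_of_pos_of_neg hg (hP τ hτ)) (by positivity)

/-- In the unbalanced case, if `x < θ0` and `(x−θ0)² < 3σ²(c²+1)/(c²+3)`, then the cubic
`P(τ)` is strictly negative for all `τ > 0`, so the marginal likelihood `τ ↦ g_τ(x)` is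
strictly decreasing on `[0,∞)` and is maximized over `τ ≥ 0` at `τ = 0`. -/
theorem unbalanced_marginal_likelihood_max_at_zero
    (σ θ0 c x : ℝ) (hσ : 0 < σ) (hc : c < 0)
    (hx : x < θ0) (hx2 : (x - θ0) ^ 2 < 3 * σ ^ 2 * (c ^ 2 + 1) / (c ^ 2 + 3)) :
    let P : ℝ → ℝ := fun τ => -τ ^ 3 + c * (x - θ0) * τ ^ 2
      + ((x - θ0) ^ 2 - σ ^ 2 * (c ^ 2 + 1)) * τ - c * (x - θ0) * σ ^ 2
    let g : ℝ → ℝ := fun τ => (1 / Real.sqrt (σ ^ 2 + τ ^ 2))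
      * stdNormalPDF ((x - θ0 + c * τ) / Real.sqrt (σ ^ 2 + τ ^ 2))
    (∀ τ : ℝ, 0 < τ → P τ < 0) ∧
    StrictAntiOn g (Set.Ici 0) ∧
    IsMaxOn g (Set.Ici 0) 0 := by
  intro P g
  have hcd : 0 < c * (x - θ0) := mul_pos_of_neg_of_neg hc (sub_neg.mpr hx)
  have hd : (x - θ0) ^ 2 * (c ^ 2 + 3) < 3 * σ ^ 2 * (c ^ 2 + 1) :=
    (lt_div_iff₀ (by positivity)).mp hx2
  have hP : ∀ τ : ℝ, 0 < τ → P τ < 0 := fun τ hτ => marginalCubic_neg hcd hd hτ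
  have hg : StrictAntiOn g (Ici 0) := strictAntiOn_marginalLikelihood hσ.ne' hP
  exact ⟨hP, hg, fun τ hτ => hg.antitoneOn self_mem_Ici hτ hτ⟩
end

section
/- Let σ > 0, θ0 ∈ ℝ, c < 0, and g_τ(x) = (1/√(σ²+τ²))·φ((x−θ0+cτ)/√(σ²+τ²)) for τ ≥ 0. If x > θ0, then there exists a unique τ* > 0 such that g_{τ*}(x) = sup_{τ ≥ 0} g_τ(x); in particular the maximizer of the marginal likelihood over τ ≥ 0 is strictly positive. -/
/-!
Write `a = x - θ0 > 0`. Up to the constant `√(2π)`, the marginal likelihood is `exp ∘ L` with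
`L τ = -(a + cτ)² / (2(σ² + τ²)) - log(σ² + τ²) / 2`, and `L' = N / (σ² + τ²)²` for the cubic
`N τ = -τ³ + acτ² + (a² - σ²(1 + c²))τ - acσ²`. Since `ac < 0`, `N 0 = -acσ² > 0` and `N` has a
root `t > 0`; writing `N τ = (τ - t) Q τ`, the quadratic factor `Q` is decreasing on `[0, ∞)`
and `Q 0 = -N 0 / t < 0`, so `N` is positive on `[0, t)` and negative on `(t, ∞)`. Hence the
likelihood increases strictly up to `t` and decreases strictly after it.
-/

open Set

lemma isMaxOn_Ici_and_unique_of_strictMonoOn_of_strictAntiOn {α β : Type*} [LinearOrder α]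
    [LinearOrder β] {f : α → β} {a t : α} (hat : a ≤ t) (hmono : StrictMonoOn f (Icc a t))
    (hanti : StrictAntiOn f (Ici t)) :
    IsMaxOn f (Ici a) t ∧ ∀ y ∈ Ici a, IsMaxOn f (Ici a) y → y = t := by
  have hlt : ∀ y ∈ Ici a, y ≠ t → f y < f t := by
    intro y (hy : a ≤ y) hyt
    rcases hyt.lt_or_gt with h | h
    · exact hmono ⟨hy, h.le⟩ ⟨hat, le_rfl⟩ h
    · exact hanti self_mem_Ici h.le h
  refine ⟨fun y hy => ?_, fun y hy hmax => ?_⟩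
  · rcases eq_or_ne y t with rfl | hyt
    · exact le_rfl
    · exact (hlt y hy hyt).le
  · by_contra hyt
    exact (hlt y hy hyt).not_ge (hmax hat)

lemma strictMonoOn_Icc_and_strictAntiOn_Ici_of_hasDerivAt {f f' : ℝ → ℝ} {a t : ℝ}
    (hf : ∀ x, HasDerivAt f (f' x) x) (hpos : ∀ x ∈ Ioo a t, 0 < f' x)
    (hneg : ∀ x ∈ Ioi t, f' x < 0) :
    StrictMonoOn f (Icc a t) ∧ StrictAntiOn f (Ici t) := by
  have hcont : Continuous f := continuous_iff_continuousAt.mpr fun x => (hf x).continuousAt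
  constructor
  · refine strictMonoOn_of_hasDerivWithinAt_pos (convex_Icc a t) hcont.continuousOn
      (fun x _ => (hf x).hasDerivWithinAt) ?_
    rwa [interior_Icc]
  · refine strictAntiOn_of_hasDerivWithinAt_neg (convex_Ici t) hcont.continuousOn
      (fun x _ => (hf x).hasDerivWithinAt) ?_
    rwa [interior_Ici]

lemma exists_pos_cubic_pos_on_Ioo_neg_on_Ioi {p q r : ℝ} (hp : p ≤ 0) (hr : 0 < r) :
    ∃ t, 0 < t ∧ (∀ y ∈ Ioo 0 t, 0 < -y ^ 3 + p * y ^ 2 + q * y + r) ∧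
      ∀ y ∈ Ioi t, -y ^ 3 + p * y ^ 2 + q * y + r < 0 := by
  set N : ℝ → ℝ := fun y => -y ^ 3 + p * y ^ 2 + q * y + r with hN
  -- `T = 1 + |q| + r` is large enough that `-T³` dominates the other terms
  obtain ⟨t, ⟨ht0, -⟩, hNt⟩ : ∃ t ∈ Icc 0 (1 + |q| + r), N t = 0 := by
    have hT : N (1 + |q| + r) < 0 := by
      simp only [hN]
      nlinarith [abs_nonneg q, le_abs_self q, sq_nonneg (1 + |q| + r)]
    exact intermediate_value_Icc' (by positivity) (by fun_prop) ⟨hT.le, by simp [hN, hr.le]⟩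
  have ht : 0 < t := ht0.lt_of_ne (by rintro rfl; simp [hN, hr.ne'] at hNt)
  set Q : ℝ → ℝ := fun y => -(y ^ 2 + y * t + t ^ 2) + p * (y + t) + q with hQ
  have hfactor : ∀ y, N y = (y - t) * Q y := fun y => by
    have : N y - N t = (y - t) * Q y := by simp only [hN, hQ]; ring
    rwa [hNt, sub_zero] at this
  have hQ0 : Q 0 < 0 := by
    have := hfactor 0
    simp only [hN] at this
    nlinarith
  have hQneg : ∀ y, 0 ≤ y → Q y < 0 := fun y hy => by
    have : Q y ≤ Q 0 := by simp only [hQ]; nlinarith [mul_nonneg hy ht.le]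
    linarith
  refine ⟨t, ht, fun y ⟨hy0, hyt⟩ => ?_, fun y (hyt : t < y) => ?_⟩
  · change 0 < N y
    rw [hfactor]
    exact mul_pos_of_neg_of_neg (by linarith) (hQneg y hy0.le)
  · change N y < 0
    rw [hfactor]
    exact mul_neg_of_pos_of_neg (by linarith) (hQneg y (by linarith))

noncomputable def marginalLogLik (σ a c τ : ℝ) : ℝ :=
  -((a + c * τ) ^ 2 / (2 * (σ ^ 2 + τ ^ 2))) - Real.log (σ ^ 2 + τ ^ 2) / 2

lemma marginal_eq_exp_marginalLogLik (σ a c τ : ℝ) (hσ : σ ≠ 0) :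
    1 / Real.sqrt (σ ^ 2 + τ ^ 2) * stdNormalPDF ((a + c * τ) / Real.sqrt (σ ^ 2 + τ ^ 2)) =
      Real.exp (marginalLogLik σ a c τ) / Real.sqrt (2 * Real.pi) := by
  have hv : 0 < σ ^ 2 + τ ^ 2 := by positivity
  have hexp : Real.exp (Real.log (σ ^ 2 + τ ^ 2) / 2) = Real.sqrt (σ ^ 2 + τ ^ 2) := by
    rw [← Real.log_sqrt hv.le, Real.exp_log (Real.sqrt_pos.mpr hv)]
  have harg : -((a + c * τ) / Real.sqrt (σ ^ 2 + τ ^ 2)) ^ 2 / 2 =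
      -((a + c * τ) ^ 2 / (2 * (σ ^ 2 + τ ^ 2))) := by
    rw [div_pow, Real.sq_sqrt hv.le]
    field_simp
  rw [marginalLogLik, Real.exp_sub, hexp, stdNormalPDF, harg]
  ring

lemma hasDerivAt_marginalLogLik (σ a c τ : ℝ) (hσ : σ ≠ 0) :
    HasDerivAt (marginalLogLik σ a c)
      ((-τ ^ 3 + a * c * τ ^ 2 + (a ^ 2 - σ ^ 2 * (1 + c ^ 2)) * τ - a * c * σ ^ 2) /
        (σ ^ 2 + τ ^ 2) ^ 2) τ := by
  have hv : 0 < σ ^ 2 + τ ^ 2 := by positivity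
  have hm : HasDerivAt (fun t => (a + c * t) ^ 2) (2 * (a + c * τ) * c) τ := by
    simpa [Pi.pow_def] using (((hasDerivAt_id τ).const_mul c).const_add a).pow 2
  have hs : HasDerivAt (fun t => σ ^ 2 + t ^ 2) (2 * τ) τ := by
    simpa using (hasDerivAt_pow 2 τ).const_add (σ ^ 2)
  refine (((hm.div (hs.const_mul 2) (by positivity)).neg).sub
    ((hs.log hv.ne').div_const 2)).congr_deriv ?_
  field_simp
  ring

/-- In the unbalanced case, if `x > θ0` then the marginal likelihood `τ ↦ g_τ(x)` has
a unique maximizer over `τ ≥ 0`, and this maximizer is strictly positive. -/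
theorem unbalanced_marginal_likelihood_unique_positive_max
    (σ θ0 c x : ℝ) (hσ : 0 < σ) (hc : c < 0) (hx : θ0 < x) :
    let g : ℝ → ℝ := fun τ => (1 / Real.sqrt (σ ^ 2 + τ ^ 2))
      * stdNormalPDF ((x - θ0 + c * τ) / Real.sqrt (σ ^ 2 + τ ^ 2))
    ∃ τstar : ℝ, 0 < τstar ∧ IsMaxOn g (Set.Ici 0) τstar ∧
      ∀ τ ∈ Set.Ici (0 : ℝ), IsMaxOn g (Set.Ici 0) τ → τ = τstar := by
  intro g
  have hac : (x - θ0) * c < 0 := mul_neg_of_pos_of_neg (sub_pos.mpr hx) hc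
  obtain ⟨t, ht, hpos, hneg⟩ := exists_pos_cubic_pos_on_Ioo_neg_on_Ioi
    (q := (x - θ0) ^ 2 - σ ^ 2 * (1 + c ^ 2)) (r := -((x - θ0) * c * σ ^ 2)) hac.le (by nlinarith [pow_pos hσ 2])
  obtain ⟨hmono, hanti⟩ := strictMonoOn_Icc_and_strictAntiOn_Ici_of_hasDerivAt
    (hasDerivAt_marginalLogLik σ (x - θ0) c · hσ.ne')
    (fun y hy => div_pos (by linarith [hpos y hy]) (by positivity))
    (fun y hy => div_neg_of_neg_of_pos (by linarith [hneg y hy]) (by positivity))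
  have hexp : StrictMono fun u => Real.exp u / Real.sqrt (2 * Real.pi) :=
    Real.exp_strictMono.div_const (by positivity)
  have hg : g = (fun u => Real.exp u / Real.sqrt (2 * Real.pi)) ∘ marginalLogLik σ (x - θ0) c :=
    funext fun τ => marginal_eq_exp_marginalLogLik σ (x - θ0) c τ hσ.ne'
  rw [hg]
  exact ⟨t, ht, isMaxOn_Ici_and_unique_of_strictMonoOn_of_strictAntiOn ht.le
    (hexp.comp_strictMonoOn hmono) (hexp.comp_strictAntiOn hanti)⟩
end
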